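/- arXiv:2201.08644 — 2 statements merged into one kernel-verified Lean document; each statement's English description precedes it below -/
import Mathlib

section
/- (Newton–MacLaurin inequality, quotient form) Let λ ∈ Γ_k and suppose 0 ≤ s ≤ l ≤ k ≤ n, 0 ≤ s < r ≤ k, l ≥ s, k ≥ r, r > s. Then [ (σ_k(λ)/C(n,k)) / (σ_l(λ)/C(n,l)) ]^{1/(k-l)} ≤ [ (σ_r(λ)/C(n,r)) / (σ_s(λ)/C(n,s)) ]^{1/(r-s)}, where C(n,j) is the binomial coefficient. -/
open Finset

/-- The k-th elementary symmetric function of x = (x_1,...,x_n). -/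
noncomputable def esymm (n k : ℕ) (x : Fin n → ℝ) : ℝ :=
  ∑ s ∈ (Finset.univ : Finset (Fin n)).powersetCard k, ∏ i ∈ s, x i

/-- σ_k(x | i): the k-th elementary symmetric function of x with the i-th entry deleted. -/
noncomputable def esymmDel (n k : ℕ) (x : Fin n → ℝ) (i : Fin n) : ℝ :=
  ∑ s ∈ ((Finset.univ : Finset (Fin n)).erase i).powersetCard k, ∏ j ∈ s, x j

/-- The Garding cone Γ_k = {x : σ_j(x) > 0 for all 1 ≤ j ≤ k}. -/
def gardingCone (n k : ℕ) : Set (Fin n → ℝ) :=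
  {x | ∀ j : ℕ, 1 ≤ j → j ≤ k → 0 < esymm n j x}

/-- σ_k for integer index, with the convention σ_k = 0 for k < 0. -/
noncomputable def esymmZ (n : ℕ) (k : ℤ) (x : Fin n → ℝ) : ℝ :=
  if k < 0 then 0 else esymm n k.toNat x

/-- σ_k(x|i) for integer index, with the convention σ_k = 0 for k < 0. -/
noncomputable def esymmDelZ (n : ℕ) (k : ℤ) (x : Fin n → ℝ) (i : Fin n) : ℝ :=
  if k < 0 then 0 else esymmDel n k.toNat x i

open Polynomial

/-!
For the means `E j = σ_j / C(n, j)` of `n` real numbers, Newton's inequality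
`E j * E (j + 2) ≤ E (j + 1) ^ 2` reduces, by Rolle's theorem, to the case `j + 2 = n`: the
derivative of `∏ (X - λ i)` again has only real roots, and these have the same means `E j` for
`j < n`. That case follows by induction on `n`, adjoining one number at a time. On `Γ_k` the
means `E 0, …, E k` are positive, so `log E` is concave on `{0, …, k}`, and the theorem compares
two chord slopes of this concave sequence.
-/

namespace Multiset

section CommSemiring

variable {R : Type*} [CommSemiring R]

lemma esymm_zero (s : Multiset R) : s.esymm 0 = 1 := by
  simp [esymm]

lemma esymm_eq_zero_of_card_lt {s : Multiset R} {k : ℕ} (h : card s < k) : s.esymm k = 0 := by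
  simp [esymm, powersetCard_eq_empty _ h]

lemma esymm_cons_succ (a : R) (s : Multiset R) (k : ℕ) :
    (a ::ₘ s).esymm (k + 1) = s.esymm (k + 1) + a * s.esymm k := by
  simp only [esymm, powersetCard_cons, map_add, sum_add, map_map, Function.comp_def, prod_cons,
    sum_map_mul_left]

end CommSemiring

theorem two_mul_card_mul_esymm_le (m : ℕ) (s : Multiset ℝ) (hs : card s = m + 2) :
    2 * (m + 2 : ℝ) * (s.esymm m * s.esymm (m + 2)) ≤ (m + 1 : ℝ) * s.esymm (m + 1) ^ 2 := by
  induction m generalizing s with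
  | zero =>
    obtain ⟨a, b, rfl⟩ := card_eq_two.mp hs
    norm_num [esymm_pair_one, esymm_pair_two, esymm_zero]
    nlinarith [sq_nonneg (a - b)]
  | succ m ih =>
    obtain ⟨a, t, rfl, ht⟩ := card_eq_succ_iff.mp hs
    have htop : t.esymm (m + 3) = 0 := esymm_eq_zero_of_card_lt (by omega)
    have := ih t ht
    rw [esymm_cons_succ, esymm_cons_succ, esymm_cons_succ, htop]
    push_cast
    -- with `N = m + 2` and `eᵢ = t.esymm (m + i)`:
    -- `N (RHS - LHS) = (N e₂ - a e₁)² + a² (N + 1) ((N - 1) e₁² - 2 N e₀ e₂)`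
    nlinarith [sq_nonneg ((m + 2 : ℝ) * t.esymm (m + 2) - a * t.esymm (m + 1)),
      mul_nonneg (mul_nonneg (sq_nonneg a) (by positivity : (0 : ℝ) ≤ m + 3))
        (sub_nonneg.mpr this)]

end Multiset

theorem Polynomial.card_roots_derivative {p : ℝ[X]} (hp : Multiset.card p.roots = p.natDegree) :
    Multiset.card (derivative p).roots = (derivative p).natDegree := by
  have h₁ := card_roots_le_derivative p
  have h₂ := card_roots' (derivative p)
  rw [natDegree_derivative] at h₂ ⊢
  omega

namespace Multiset

theorem exists_esymm_roots_derivative {n : ℕ} (s : Multiset ℝ) (hs : card s = n + 1) :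
    ∃ t : Multiset ℝ, card t = n ∧
      ∀ i ≤ n, (n + 1 : ℝ) * t.esymm i = (n + 1 - i : ℝ) * s.esymm i := by
  set p := (s.map fun a => X - C a).prod
  have hmonic : p.Monic := monic_multiset_prod_of_monic _ _ fun a _ => monic_X_sub_C a
  have hdeg : p.natDegree = n + 1 := by rw [natDegree_multiset_prod_X_sub_C_eq_card, hs]
  have hroots : card p.roots = p.natDegree := by rw [roots_multiset_prod_X_sub_C, hdeg, hs]
  have hqdeg : (derivative p).natDegree = n := by rw [natDegree_derivative, hdeg]; rfl
  have hqlead : (derivative p).leadingCoeff = n + 1 := by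
    rw [leadingCoeff_derivative, hmonic.leadingCoeff, hdeg]; push_cast; ring
  refine ⟨(derivative p).roots, by rw [card_roots_derivative hroots, hqdeg], fun i hi => ?_⟩
  have vieta_q := coeff_eq_esymm_roots_of_card (card_roots_derivative hroots)
    (k := n - i) (by rw [hqdeg]; omega)
  have vieta_p := prod_X_sub_C_coeff s (k := n - i + 1) (by omega)
  rw [hqdeg, hqlead, show n - (n - i) = i by omega, coeff_derivative] at vieta_q
  rw [hs, show n + 1 - (n - i + 1) = i by omega] at vieta_p
  rw [vieta_p, Nat.cast_sub hi] at vieta_q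
  have hsign : ((-1 : ℝ) ^ i) ≠ 0 := pow_ne_zero _ (by norm_num)
  apply mul_right_cancel₀ hsign
  linear_combination -vieta_q

noncomputable def esymmMean (s : Multiset ℝ) (k : ℕ) : ℝ :=
  s.esymm k / (card s).choose k

theorem exists_esymmMean_eq {n : ℕ} (s : Multiset ℝ) (hs : card s = n + 1) :
    ∃ t : Multiset ℝ, card t = n ∧ ∀ i ≤ n, t.esymmMean i = s.esymmMean i := by
  obtain ⟨t, ht, hvieta⟩ := exists_esymm_roots_derivative s hs
  refine ⟨t, ht, fun i hi => ?_⟩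
  have hchoose : (n.choose i * (n + 1) : ℝ) = (n + 1).choose i * ((n + 1 - i : ℕ) : ℝ) := by
    exact_mod_cast Nat.choose_mul_succ_eq n i
  have hpos₁ : (0 : ℝ) < n.choose i := by exact_mod_cast Nat.choose_pos hi
  have hpos₂ : (0 : ℝ) < (n + 1).choose i := by exact_mod_cast Nat.choose_pos (by omega)
  rw [esymmMean, esymmMean, ht, hs, div_eq_div_iff hpos₁.ne' hpos₂.ne']
  push_cast [Nat.cast_sub (by omega : i ≤ n + 1)] at hchoose
  have hgap : (n + 1 - i : ℝ) ≠ 0 := by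
    have : (i : ℝ) ≤ n := by exact_mod_cast hi
    linarith
  apply mul_right_cancel₀ hgap
  linear_combination (n.choose i : ℝ) * hvieta i hi - t.esymm i * hchoose

theorem esymmMean_mul_esymmMean_le_sq (s : Multiset ℝ) {j : ℕ} (hj : j + 2 ≤ card s) :
    s.esymmMean j * s.esymmMean (j + 2) ≤ s.esymmMean (j + 1) ^ 2 := by
  obtain ⟨n, hn⟩ : ∃ n, card s = n := ⟨_, rfl⟩
  induction n generalizing s with
  | zero => omega
  | succ n ih =>
    rcases hj.eq_or_lt with htop | hlt
    · have hchoose : ((j + 2).choose j : ℝ) = (j + 2) * (j + 1) / 2 := by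
        rw [Nat.choose_symm_add, Nat.cast_choose_two]; push_cast; ring
      have := two_mul_card_mul_esymm_le j s htop.symm
      rw [esymmMean, esymmMean, esymmMean, ← htop, hchoose, Nat.choose_succ_self_right,
        Nat.choose_self]
      rw [div_pow, div_mul_div_comm, div_le_div_iff₀ (by positivity) (by positivity)]
      push_cast
      nlinarith
    · obtain ⟨t, ht, hmean⟩ := exists_esymmMean_eq s hn
      rw [← hmean j (by omega), ← hmean (j + 1) (by omega), ← hmean (j + 2) (by omega)]
      exact ih t (by omega) ht

end Multiset

theorem Finset.card_mul_sum_le_card_mul_sum {ι α : Type*} [CommSemiring α] [PartialOrder α]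
    [IsOrderedRing α] {A B : Finset ι} {f : ι → α} (h : ∀ a ∈ A, ∀ b ∈ B, f b ≤ f a) :
    #A * ∑ b ∈ B, f b ≤ #B * ∑ a ∈ A, f a :=
  calc (#A : α) * ∑ b ∈ B, f b = ∑ _a ∈ A, ∑ b ∈ B, f b := by rw [sum_const, nsmul_eq_mul]
    _ ≤ ∑ a ∈ A, ∑ _b ∈ B, f a := sum_le_sum fun a ha => sum_le_sum fun b hb => h a ha b hb
    _ = #B * ∑ a ∈ A, f a := by simp only [sum_const, nsmul_eq_mul, mul_sum]

section ConcaveSequence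

variable {L : ℕ → ℝ} {k : ℕ}

lemma succ_sub_anti_of_concave (hL : ∀ j, j + 2 ≤ k → L j + L (j + 2) ≤ 2 * L (j + 1))
    {i j : ℕ} (hij : i ≤ j) (hjk : j < k) : L (j + 1) - L j ≤ L (i + 1) - L i := by
  induction j, hij using Nat.le_induction with
  | base => rfl
  | succ j hij ih =>
    have := hL j (by omega)
    linarith [ih (by omega)]

lemma slope_anti_adjacent_of_concave (hL : ∀ j, j + 2 ≤ k → L j + L (j + 2) ≤ 2 * L (j + 1))
    {u v : ℕ} (huv : u ≤ v) (hvk : v ≤ k) :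
    ((v : ℝ) - u) * (L k - L v) ≤ ((k : ℝ) - v) * (L v - L u) := by
  have key := card_mul_sum_le_card_mul_sum (A := Ico u v) (B := Ico v k)
    (f := fun j => L (j + 1) - L j) fun a ha b hb => by
      simp only [mem_Ico] at ha hb
      exact succ_sub_anti_of_concave hL (by omega) hb.2
  rwa [sum_Ico_sub L huv, sum_Ico_sub L hvk, Nat.card_Ico, Nat.card_Ico, Nat.cast_sub huv,
    Nat.cast_sub hvk] at key

theorem slope_anti_of_concave (hL : ∀ j, j + 2 ≤ k → L j + L (j + 2) ≤ 2 * L (j + 1))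
    {s l r : ℕ} (hsl : s ≤ l) (hlk : l ≤ k) (hsr : s ≤ r) (hrk : r ≤ k) :
    ((r : ℝ) - s) * (L k - L l) ≤ ((k : ℝ) - l) * (L r - L s) := by
  have h₁ := slope_anti_adjacent_of_concave hL hsl hlk
  have h₂ := slope_anti_adjacent_of_concave hL hsr hrk
  rcases (hsl.trans hlk).eq_or_lt with hsk | hsk
  · obtain rfl : l = s := by omega
    obtain rfl : r = l := by omega
    simp [← hsk]
  · have hsr' : (0 : ℝ) ≤ r - s := sub_nonneg.mpr (by exact_mod_cast hsr)
    have hlk' : (0 : ℝ) ≤ k - l := sub_nonneg.mpr (by exact_mod_cast hlk)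
    have hsk' : (0 : ℝ) < k - s := sub_pos.mpr (by exact_mod_cast hsk)
    refine le_of_mul_le_mul_left ?_ hsk'
    nlinarith [mul_le_mul_of_nonneg_left h₁ hsr', mul_le_mul_of_nonneg_left h₂ hlk']

end ConcaveSequence

theorem rpow_div_le_rpow_div_of_logConcave {P : ℕ → ℝ} {k s l r : ℕ} (hpos : ∀ j ≤ k, 0 < P j)
    (hP : ∀ j, j + 2 ≤ k → P j * P (j + 2) ≤ P (j + 1) ^ 2)
    (hsl : s ≤ l) (hlk : l < k) (hsr : s < r) (hrk : r ≤ k) :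
    (P k / P l) ^ (1 / ((k : ℝ) - l)) ≤ (P r / P s) ^ (1 / ((r : ℝ) - s)) := by
  have hlog : ∀ j, j + 2 ≤ k →
      Real.log (P j) + Real.log (P (j + 2)) ≤ 2 * Real.log (P (j + 1)) := fun j hj => by
    have hsq : 2 * Real.log (P (j + 1)) = Real.log (P (j + 1) ^ 2) := by
      rw [Real.log_pow]; norm_num
    rw [← Real.log_mul (hpos j (by omega)).ne' (hpos (j + 2) hj).ne', hsq]
    exact Real.log_le_log (mul_pos (hpos j (by omega)) (hpos (j + 2) hj)) (hP j hj)
  have hchord := slope_anti_of_concave hlog hsl hlk.le hsr.le hrk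
  have hkl : (0 : ℝ) < k - l := sub_pos.mpr (by exact_mod_cast hlk)
  have hrs : (0 : ℝ) < r - s := sub_pos.mpr (by exact_mod_cast hsr)
  rw [Real.rpow_def_of_pos (div_pos (hpos k le_rfl) (hpos l hlk.le)),
    Real.rpow_def_of_pos (div_pos (hpos r hrk) (hpos s (by omega))), Real.exp_le_exp,
    Real.log_div (hpos k le_rfl).ne' (hpos l hlk.le).ne',
    Real.log_div (hpos r hrk).ne' (hpos s (by omega)).ne', mul_one_div, mul_one_div,
    div_le_div_iff₀ hkl hrs]
  linarith

/-- Newton–MacLaurin inequality, quotient form: for λ ∈ Γ_k and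
0 ≤ s ≤ l ≤ k ≤ n, 0 ≤ s < r ≤ k, l < k,
[(σ_k/C(n,k))/(σ_l/C(n,l))]^{1/(k-l)} ≤ [(σ_r/C(n,r))/(σ_s/C(n,s))]^{1/(r-s)}. -/
theorem newton_maclaurin_quotient (n k l r s : ℕ)
    (hsl : s ≤ l) (hlk : l < k) (hkn : k ≤ n) (hsr : s < r) (hrk : r ≤ k)
    (x : Fin n → ℝ) (hx : x ∈ gardingCone n k) :
    ((esymm n k x / (n.choose k : ℝ)) / (esymm n l x / (n.choose l : ℝ))) ^
        ((1 : ℝ) / ((k : ℝ) - (l : ℝ))) ≤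
      ((esymm n r x / (n.choose r : ℝ)) / (esymm n s x / (n.choose s : ℝ))) ^
        ((1 : ℝ) / ((r : ℝ) - (s : ℝ))) := by
  set σ := (univ : Finset (Fin n)).val.map x
  have hcard : Multiset.card σ = n := by simp [σ]
  have hmean : ∀ j, esymm n j x / (n.choose j : ℝ) = σ.esymmMean j := fun j => by
    rw [Multiset.esymmMean, hcard, Finset.esymm_map_val]; rfl
  simp only [hmean]
  refine rpow_div_le_rpow_div_of_logConcave (fun j hj => ?_)
    (fun j hj => σ.esymmMean_mul_esymmMean_le_sq (by omega)) hsl hlk hsr hrk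
  rcases Nat.eq_zero_or_pos j with rfl | hj₀
  · simp [Multiset.esymmMean, Multiset.esymm_zero]
  · rw [← hmean]
    exact div_pos (hx j hj₀ hj) (by exact_mod_cast Nat.choose_pos (hj.trans hkn))
end

section
/- For λ ∈ Γ_k and 0 ≤ l < k ≤ n, the function λ ↦ [σ_k(λ)/σ_l(λ)]^{1/(k-l)} is concave on the Garding cone Γ_k. -/
open Finset

open Polynomial

/-!
The cone `Γ_k` is convex and the function is positively homogeneous of degree one, so concavity
amounts to superadditivity. Telescoping writes `(σ_k / σ_l)^(1/(k-l))` as the geometric mean of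
the quotients `σ_{j+1} / σ_j`, `l ≤ j < k`, and by AM-GM a geometric mean of positive
superadditive functions is superadditive.

Superadditivity of `σ_{k+1} / σ_k` on `Γ_{k+1}` (Marcus–Lopes) goes by induction on `k`: the
identity `σ_1 σ_{k+1} = (k + 2) σ_{k+2} + ∑ i, x_i² σ_k(x|i)` writes `(k + 2) σ_{k+2} / σ_{k+1}`
as `σ_1 - ∑ i, x_i² / (σ_{k+1}(x|i) / σ_k(x|i) + x_i)`, and each summand is subadditive by the
induction hypothesis and the Cauchy–Schwarz inequality `(a + b)² / (u + v) ≤ a² / u + b² / v`.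
This needs that deleting a coordinate maps `Γ_{k+1}` into `Γ_k`, again by induction. Along the
segment from `x` to `(1, …, 1)`, which stays in `Γ_{k+1}`, the function `σ_k(·|i)` cannot vanish:
otherwise Newton's inequality `σ_{k+1} σ_{k-1} ≤ σ_k²` for `x|i` (the coefficients of the
real-rooted polynomial `∏ m ≠ i, (t + x_m)`), together with `σ_{k-1}(·|i) > 0`, would give
`σ_{k+1}(x) = σ_{k+1}(x|i) ≤ 0`. As it is positive at `(1, …, 1)`, it is positive at `x`.
-/

theorem ConvexCone.concaveOn_of_superadditive {𝕜 E β : Type*} [Semiring 𝕜] [PartialOrder 𝕜]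
    [AddCommMonoid E] [Module 𝕜 E] [AddCommMonoid β] [PartialOrder β] [Module 𝕜 β]
    (C : ConvexCone 𝕜 E) {f : E → β}
    (hsmul : ∀ x ∈ C, ∀ c : 𝕜, 0 < c → f (c • x) = c • f x)
    (hadd : ∀ x ∈ C, ∀ y ∈ C, f x + f y ≤ f (x + y)) : ConcaveOn 𝕜 C f := by
  refine ⟨C.convex, fun x hx y hy a b ha hb hab => ?_⟩
  rcases ha.eq_or_lt with rfl | ha
  · obtain rfl : b = 1 := by simpa using hab
    simp
  rcases hb.eq_or_lt with rfl | hb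
  · obtain rfl : a = 1 := by simpa using hab
    simp
  rw [← hsmul x hx a ha, ← hsmul y hy b hb]
  exact hadd _ (C.smul_mem ha hx) _ (C.smul_mem hb hy)

namespace Real
variable {ι : Type*} {s : Finset ι} {u v : ι → ℝ}

theorem geom_mean_add_geom_mean_le (hs : s.Nonempty) (hu : ∀ i ∈ s, 0 < u i)
    (hv : ∀ i ∈ s, 0 < v i) :
    (∏ i ∈ s, u i) ^ (1 / #s : ℝ) + (∏ i ∈ s, v i) ^ (1 / #s : ℝ) ≤
      (∏ i ∈ s, (u i + v i)) ^ (1 / #s : ℝ) := by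
  have huv : ∀ i ∈ s, 0 < u i + v i := fun i hi => add_pos (hu i hi) (hv i hi)
  have hw : ∑ _i ∈ s, (1 / #s : ℝ) = 1 := by
    rw [sum_const, nsmul_eq_mul, mul_one_div_cancel (by exact_mod_cast hs.card_ne_zero)]
  -- AM-GM for the ratios `u i / (u i + v i)` and `v i / (u i + v i)`, which add up to one
  have amgm : ∀ w : ι → ℝ, (∀ i ∈ s, 0 < w i) →
      (∏ i ∈ s, w i) ^ (1 / #s : ℝ) / (∏ i ∈ s, (u i + v i)) ^ (1 / #s : ℝ) ≤
        ∑ i ∈ s, 1 / #s * (w i / (u i + v i)) := fun w hw' => by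
    rw [← div_rpow (prod_nonneg fun i hi => (hw' i hi).le) (prod_nonneg fun i hi => (huv i hi).le),
      ← prod_div_distrib,
      ← finsetProd_rpow s _ fun i hi => div_nonneg (hw' i hi).le (huv i hi).le]
    exact geom_mean_le_arith_mean_weighted s _ _ (fun _ _ => by positivity) hw
      fun i hi => div_nonneg (hw' i hi).le (huv i hi).le
  have hsum :
      ∑ i ∈ s, 1 / #s * (u i / (u i + v i)) + ∑ i ∈ s, 1 / #s * (v i / (u i + v i)) = 1 := by
    rw [← sum_add_distrib]
    refine (sum_congr rfl fun i hi => ?_).trans hw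
    rw [← mul_add, ← add_div, div_self (huv i hi).ne', mul_one]
  have hD : 0 < (∏ i ∈ s, (u i + v i)) ^ (1 / #s : ℝ) := rpow_pos_of_pos (prod_pos huv) _
  have := add_le_add (amgm u hu) (amgm v hv)
  rwa [hsum, ← add_div, div_le_one hD] at this

end Real

lemma prod_Ico_div_of_ne_zero {K : Type*} [Field K] {f : ℕ → K} {l k : ℕ} (hlk : l ≤ k)
    (hf : ∀ j ∈ Icc l k, f j ≠ 0) : ∏ j ∈ Ico l k, f (j + 1) / f j = f k / f l := by
  induction k, hlk using Nat.le_induction with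
  | base => simp [div_self (hf l (by simp))]
  | succ k hlk ih =>
    rw [prod_Ico_succ_top hlk, ih fun j hj => hf j (Icc_subset_Icc_right k.le_succ hj),
      mul_comm, div_mul_div_cancel₀ (hf k (by simp [hlk]))]

lemma sq_add_div_add_le {a b u v : ℝ} (hu : 0 < u) (hv : 0 < v) :
    (a + b) ^ 2 / (u + v) ≤ a ^ 2 / u + b ^ 2 / v := by
  simpa [Fin.sum_univ_two] using
    sq_sum_div_le_sum_sq_div univ ![a, b] (g := ![u, v]) (by simp [Fin.forall_fin_two, hu, hv])

lemma sq_add_div_add_le_of_le {a b α β γ : ℝ} (hα : 0 < α + a) (hβ : 0 < β + b)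
    (hγ : α + β ≤ γ) : (a + b) ^ 2 / (γ + (a + b)) ≤ a ^ 2 / (α + a) + b ^ 2 / (β + b) :=
  calc (a + b) ^ 2 / (γ + (a + b)) ≤ (a + b) ^ 2 / ((α + a) + (β + b)) :=
        div_le_div_of_nonneg_left (sq_nonneg _) (by linarith) (by linarith)
    _ ≤ a ^ 2 / (α + a) + b ^ 2 / (β + b) := sq_add_div_add_le hα hβ

lemma pos_of_pos_of_ne_zero_on_Icc {f : ℝ → ℝ} {a b : ℝ} (hab : a ≤ b)
    (hf : ContinuousOn f (Set.Icc a b)) (hne : ∀ t ∈ Set.Icc a b, f t ≠ 0) (hb : 0 < f b) :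
    0 < f a := by
  by_contra! ha
  obtain ⟨t, ht, hft⟩ := intermediate_value_Icc hab hf ⟨ha, hb.le⟩
  exact hne t ht hft

namespace Polynomial

theorem Splits.derivative_of_real {p : ℝ[X]} (hp : p.Splits) : p.derivative.Splits := by
  refine splits_iff_card_roots.2 (le_antisymm (card_roots' _) ?_)
  have hroots := card_roots_le_derivative p
  rw [splits_iff_card_roots.1 hp] at hroots
  have := natDegree_derivative_le p
  omega

theorem Splits.iterate_derivative_of_real {p : ℝ[X]} (hp : p.Splits) (m : ℕ) :
    (derivative^[m] p).Splits := by
  induction m with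
  | zero => exact hp
  | succ m ih => rw [Function.iterate_succ_apply']; exact ih.derivative_of_real

lemma eval_mul_eval_derivative_derivative_le_multiset_prod (s : Multiset ℝ) (t : ℝ) :
    (s.map fun a => X - C a).prod.eval t *
        (s.map fun a => X - C a).prod.derivative.derivative.eval t ≤
      (s.map fun a => X - C a).prod.derivative.eval t ^ 2 := by
  induction s using Multiset.induction with
  | empty => simp
  | cons r s ih =>
    rw [Multiset.map_cons, Multiset.prod_cons]
    set q := (s.map fun a => X - C a).prod
    have hq' : derivative ((X - C r) * q) = q + (X - C r) * derivative q := by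
      simp only [derivative_mul, derivative_sub, derivative_X, derivative_C, sub_zero, one_mul]
    have hq'' : derivative (q + (X - C r) * derivative q) =
        2 * derivative q + (X - C r) * derivative (derivative q) := by
      simp only [derivative_add, derivative_mul, derivative_sub, derivative_X, derivative_C,
        sub_zero, one_mul]
      ring
    simp only [hq', hq'', eval_add, eval_mul, eval_sub, eval_X, eval_C, eval_ofNat]
    nlinarith [sq_nonneg (eval t q), mul_le_mul_of_nonneg_left ih (sq_nonneg (t - r))]

theorem Splits.eval_mul_eval_derivative_derivative_le {p : ℝ[X]} (hp : p.Splits) (t : ℝ) :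
    p.eval t * p.derivative.derivative.eval t ≤ p.derivative.eval t ^ 2 := by
  have key := eval_mul_eval_derivative_derivative_le_multiset_prod p.roots t
  rw [hp.eq_prod_roots]
  simp only [derivative_C_mul, eval_mul, eval_C]
  nlinarith [mul_le_mul_of_nonneg_left key (sq_nonneg p.leadingCoeff)]

end Polynomial

section ElementarySymmetric

variable {ι R : Type*} [CommSemiring R]

noncomputable def esymmOn (A : Finset ι) (k : ℕ) (x : ι → R) : R :=
  ∑ s ∈ A.powersetCard k, ∏ i ∈ s, x i

@[simp]
lemma esymmOn_zero (A : Finset ι) (x : ι → R) : esymmOn A 0 x = 1 := by simp [esymmOn]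

lemma esymmOn_of_card_lt {A : Finset ι} {k : ℕ} (h : #A < k) (x : ι → R) :
    esymmOn A k x = 0 := by
  simp [esymmOn, powersetCard_eq_empty.2 h]

lemma esymmOn_one (A : Finset ι) (x : ι → R) : esymmOn A 1 x = ∑ i ∈ A, x i := by
  simp [esymmOn, powersetCard_one]

lemma esymmOn_one_add (A : Finset ι) (x y : ι → R) :
    esymmOn A 1 (x + y) = esymmOn A 1 x + esymmOn A 1 y := by
  simp [esymmOn_one, sum_add_distrib]

lemma esymmOn_smul (A : Finset ι) (k : ℕ) (c : R) (x : ι → R) :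
    esymmOn A k (c • x) = c ^ k * esymmOn A k x := by
  rw [esymmOn, esymmOn, mul_sum]
  refine sum_congr rfl fun s hs => ?_
  simp [prod_mul_distrib, (mem_powersetCard.1 hs).2]

lemma esymmOn_const_one (A : Finset ι) (k : ℕ) :
    esymmOn A k (fun _ => (1 : R)) = (#A).choose k := by
  simp [esymmOn, card_powersetCard]

lemma prod_X_add_C_coeff_eq_esymmOn (A : Finset ι) (x : ι → R) {k : ℕ} (hk : k ≤ #A) :
    (∏ i ∈ A, (X + C (x i))).coeff (#A - k) = esymmOn A k x := by
  rw [prod_X_add_C_coeff A x (Nat.sub_le _ _), Nat.sub_sub_self hk, esymmOn]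

lemma esymmOn_add_const (A : Finset ι) (x : ι → R) (s : R) {j : ℕ} (hj : j ≤ #A) :
    esymmOn A j (fun i => x i + s) =
      ∑ m ∈ range (j + 1), ((m + (#A - j)).choose (#A - j) : R) * esymmOn A (j - m) x * s ^ m := by
  have htaylor : ∏ i ∈ A, (X + C (x i + s)) = taylor s (∏ i ∈ A, (X + C (x i))) := by
    rw [taylor_apply, Polynomial.prod_comp]
    refine prod_congr rfl fun i _ => ?_
    simp only [add_comp, X_comp, C_comp, C_add]
    ring
  have hdeg : (hasseDeriv (#A - j) (∏ i ∈ A, (X + C (x i)))).natDegree < j + 1 := by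
    refine (natDegree_hasseDeriv_le _ _).trans_lt ?_
    rw [natDegree_prod_of_monic _ _ fun i _ => monic_X_add_C (x i)]
    simp only [natDegree_add_C, sum_const, smul_eq_mul]
    have := Nat.mul_le_mul_left #A (natDegree_X_le (R := R))
    omega
  rw [← prod_X_add_C_coeff_eq_esymmOn A _ hj, htaylor, taylor_coeff, eval_eq_sum_range' hdeg]
  refine sum_congr rfl fun m hm => ?_
  rw [mem_range] at hm
  rw [hasseDeriv_coeff, show m + (#A - j) = #A - (j - m) by omega,
    prod_X_add_C_coeff_eq_esymmOn A x (by omega)]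

variable [DecidableEq ι]

lemma esymmOn_insert {A : Finset ι} {i : ι} (hi : i ∉ A) (k : ℕ) (x : ι → R) :
    esymmOn (insert i A) (k + 1) x = esymmOn A (k + 1) x + x i * esymmOn A k x := by
  have hnot : ∀ s ∈ A.powersetCard k, i ∉ s := fun s hs hmem =>
    hi ((mem_powersetCard.1 hs).1 hmem)
  rw [esymmOn, powersetCard_succ_insert hi, sum_union, sum_image, esymmOn, esymmOn, mul_sum]
  · exact congrArg _ (sum_congr rfl fun s hs => prod_insert (hnot s hs))
  · intro s hs t ht hst
    simpa [erase_insert (hnot s hs), erase_insert (hnot t ht)] using congrArg (erase · i) hst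
  · refine disjoint_left.2 fun s hs hs' => ?_
    obtain ⟨t, -, rfl⟩ := mem_image.1 hs'
    exact hi ((mem_powersetCard.1 hs).1 (mem_insert_self i t))

lemma esymmOn_succ_of_mem {A : Finset ι} {i : ι} (hi : i ∈ A) (k : ℕ) (x : ι → R) :
    esymmOn A (k + 1) x = esymmOn (A.erase i) (k + 1) x + x i * esymmOn (A.erase i) k x := by
  conv_lhs => rw [← insert_erase hi]
  exact esymmOn_insert (notMem_erase i A) k x

lemma sum_mul_esymmOn_erase (A : Finset ι) (k : ℕ) (x : ι → R) :
    ∑ i ∈ A, x i * esymmOn (A.erase i) k x = (k + 1) * esymmOn A (k + 1) x := by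
  induction A using Finset.induction_on generalizing k with
  | empty => rw [esymmOn_of_card_lt (by simp), sum_empty, mul_zero]
  | insert a B ha ih =>
    have herase : ∀ i ∈ B, (insert a B).erase i = insert a (B.erase i) := fun i hi =>
      erase_insert_of_ne (ne_of_mem_of_not_mem hi ha).symm
    rw [sum_insert ha, erase_insert ha, sum_congr rfl fun i hi => by rw [herase i hi]]
    cases k with
    | zero => simp [esymmOn_one, sum_insert ha]
    | succ k =>
      have hins : ∀ i ∈ B, x i * esymmOn (insert a (B.erase i)) (k + 1) x =
          x i * esymmOn (B.erase i) (k + 1) x + x a * (x i * esymmOn (B.erase i) k x) :=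
        fun i _ => by rw [esymmOn_insert (notMem_mono (erase_subset i B) ha)]; ring
      rw [sum_congr rfl hins, sum_add_distrib, ← mul_sum, ih, ih, esymmOn_insert ha]
      push_cast
      ring

lemma esymmOn_one_mul_esymmOn_succ (A : Finset ι) (k : ℕ) (x : ι → R) :
    esymmOn A 1 x * esymmOn A (k + 1) x =
      (k + 2) * esymmOn A (k + 2) x + ∑ i ∈ A, x i ^ 2 * esymmOn (A.erase i) k x := by
  have hsplit : ∀ i ∈ A, x i * esymmOn A (k + 1) x =
      x i * esymmOn (A.erase i) (k + 1) x + x i ^ 2 * esymmOn (A.erase i) k x := fun i hi => by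
    rw [esymmOn_succ_of_mem hi]; ring
  rw [esymmOn_one, sum_mul, sum_congr rfl hsplit, sum_add_distrib, sum_mul_esymmOn_erase]
  push_cast
  ring

end ElementarySymmetric

section Newton
variable {ι : Type*}

lemma eval_zero_iterate_derivative_prod_X_add_C (A : Finset ι) (x : ι → ℝ) {m : ℕ}
    (hm : m ≤ #A) :
    (derivative^[#A - m] (∏ i ∈ A, (X + C (x i)))).eval 0 = (#A - m).factorial * esymmOn A m x := by
  rw [← coeff_zero_eq_eval_zero, coeff_iterate_derivative, zero_add, Nat.descFactorial_self,
    nsmul_eq_mul, prod_X_add_C_coeff_eq_esymmOn A x hm]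

/-- A weak form of Newton's inequality `σ_{j+1}² ≥ σ_{j+2} σ_j`. -/
theorem esymmOn_mul_esymmOn_nonpos_of_eq_zero (A : Finset ι) (x : ι → ℝ) {j : ℕ}
    (h : esymmOn A (j + 1) x = 0) : esymmOn A (j + 2) x * esymmOn A j x ≤ 0 := by
  rcases lt_or_ge #A (j + 2) with hA | hA
  · rw [esymmOn_of_card_lt hA, zero_mul]
  set q := derivative^[#A - (j + 2)] (∏ i ∈ A, (X + C (x i)))
  have hq : q.Splits := (Splits.prod fun i _ => Splits.X_add_C (x i)).iterate_derivative_of_real _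
  have hq' : q.derivative = derivative^[#A - (j + 1)] (∏ i ∈ A, (X + C (x i))) := by
    rw [show #A - (j + 1) = #A - (j + 2) + 1 by omega, Function.iterate_succ_apply']
  have hq'' : q.derivative.derivative = derivative^[#A - j] (∏ i ∈ A, (X + C (x i))) := by
    rw [hq', show #A - j = #A - (j + 1) + 1 by omega, Function.iterate_succ_apply']
  have key := hq.eval_mul_eval_derivative_derivative_le 0
  rw [hq'', hq', eval_zero_iterate_derivative_prod_X_add_C A x hA,
    eval_zero_iterate_derivative_prod_X_add_C A x (by omega),
    eval_zero_iterate_derivative_prod_X_add_C A x (by omega), h] at key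
  refine nonpos_of_mul_nonpos_left (b := ((#A - (j + 2)).factorial * (#A - j).factorial : ℝ))
    ?_ (by positivity)
  linarith

end Newton

section GardingCone
variable {ι : Type*} {A : Finset ι} {j k l : ℕ} {x : ι → ℝ}

def gardingConeOn (A : Finset ι) (k : ℕ) : Set (ι → ℝ) :=
  {x | ∀ j, 1 ≤ j → j ≤ k → 0 < esymmOn A j x}

lemma gardingConeOn_anti (h : j ≤ k) : gardingConeOn A k ⊆ gardingConeOn A j :=
  fun _ hx m h1 h2 => hx m h1 (h2.trans h)

lemma esymmOn_pos_of_mem_gardingConeOn (hx : x ∈ gardingConeOn A k) (hj : j ≤ k) :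
    0 < esymmOn A j x := by
  rcases Nat.eq_zero_or_pos j with rfl | hj0
  · simp
  · exact hx j hj0 hj

lemma card_le_of_mem_gardingConeOn (hk : k ≠ 0) (hx : x ∈ gardingConeOn A k) : k ≤ #A := by
  by_contra! h
  simpa [esymmOn_of_card_lt h] using hx k (Nat.one_le_iff_ne_zero.2 hk) le_rfl

lemma one_mem_gardingConeOn (hk : k ≤ #A) : (1 : ι → ℝ) ∈ gardingConeOn A k := fun j _ hj => by
  rw [Pi.one_def, esymmOn_const_one]
  exact_mod_cast Nat.choose_pos (hj.trans hk)

lemma smul_mem_gardingConeOn (hx : x ∈ gardingConeOn A k) {c : ℝ} (hc : 0 < c) :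
    c • x ∈ gardingConeOn A k := fun j hj1 hjk => by
  rw [esymmOn_smul]
  exact mul_pos (by positivity) (hx j hj1 hjk)

lemma add_const_mem_gardingConeOn (hx : x ∈ gardingConeOn A k) {s : ℝ} (hs : 0 ≤ s) :
    (fun i => x i + s) ∈ gardingConeOn A k := fun j hj1 hjk => by
  have hjA : j ≤ #A := hjk.trans (card_le_of_mem_gardingConeOn (by omega) hx)
  rw [esymmOn_add_const A x s hjA, sum_range_succ']
  refine add_pos_of_nonneg_of_pos (sum_nonneg fun m hm => ?_) ?_
  · have := esymmOn_pos_of_mem_gardingConeOn hx (show j - (m + 1) ≤ k by omega)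
    positivity
  · simpa using esymmOn_pos_of_mem_gardingConeOn hx hjk

lemma segment_one_mem_gardingConeOn (hx : x ∈ gardingConeOn A k) {t : ℝ} (ht : t ∈ Set.Icc 0 1) :
    (fun i => (1 - t) * x i + t) ∈ gardingConeOn A k := by
  rcases eq_or_ne k 0 with rfl | hk
  · intro j hj1 hj0; omega
  rcases eq_or_lt_of_le ht.2 with rfl | ht1
  · simpa [Pi.one_def] using one_mem_gardingConeOn (card_le_of_mem_gardingConeOn hk hx)
  · exact add_const_mem_gardingConeOn (smul_mem_gardingConeOn hx (sub_pos.2 ht1)) ht.1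

lemma continuous_esymmOn (A : Finset ι) (j : ℕ) : Continuous (esymmOn A j : (ι → ℝ) → ℝ) := by
  unfold esymmOn
  fun_prop

lemma esymmOn_div_rpow_smul (hlk : l < k) (hx : x ∈ gardingConeOn A k) {c : ℝ} (hc : 0 < c) :
    (esymmOn A k (c • x) / esymmOn A l (c • x)) ^ ((1 : ℝ) / ((k : ℝ) - (l : ℝ))) =
      c * (esymmOn A k x / esymmOn A l x) ^ ((1 : ℝ) / ((k : ℝ) - (l : ℝ))) := by
  have hl := esymmOn_pos_of_mem_gardingConeOn hx hlk.le
  have hk := esymmOn_pos_of_mem_gardingConeOn hx le_rfl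
  have hratio : esymmOn A k (c • x) / esymmOn A l (c • x) =
      c ^ (k - l) * (esymmOn A k x / esymmOn A l x) := by
    rw [esymmOn_smul, esymmOn_smul, ← Nat.sub_add_cancel hlk.le, pow_add, Nat.add_sub_cancel]
    field_simp
  have hkl : ((k : ℝ) - l) ≠ 0 := sub_ne_zero.2 (by exact_mod_cast hlk.ne')
  rw [hratio, Real.mul_rpow (by positivity) (by positivity), ← Real.rpow_natCast,
    ← Real.rpow_mul hc.le, Nat.cast_sub hlk.le, mul_one_div_cancel hkl, Real.rpow_one]

lemma esymmOn_div_rpow_eq_geom_mean (hlk : l < k) (hx : x ∈ gardingConeOn A k) :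
    (esymmOn A k x / esymmOn A l x) ^ ((1 : ℝ) / ((k : ℝ) - (l : ℝ))) =
      (∏ j ∈ Ico l k, esymmOn A (j + 1) x / esymmOn A j x) ^ (1 / #(Ico l k) : ℝ) := by
  rw [prod_Ico_div_of_ne_zero hlk.le fun j hj =>
      (esymmOn_pos_of_mem_gardingConeOn hx (mem_Icc.1 hj).2).ne',
    Nat.card_Ico, Nat.cast_sub hlk.le]

end GardingCone

section Superadditivity
variable {ι : Type*} [DecidableEq ι] {A : Finset ι} {i : ι} {k l : ℕ} {x y : ι → ℝ}

lemma esymmOn_erase_ne_zero (hi : i ∈ A) {z : ι → ℝ} (hz : z ∈ gardingConeOn A (k + 2))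
    (hk : 0 < esymmOn (A.erase i) k z) : esymmOn (A.erase i) (k + 1) z ≠ 0 := by
  intro h0
  have hnewton := esymmOn_mul_esymmOn_nonpos_of_eq_zero (A.erase i) z h0
  have hsplit := esymmOn_succ_of_mem hi (k + 1) z
  rw [h0, mul_zero, add_zero] at hsplit
  have := hz (k + 2) (by omega) le_rfl
  rw [hsplit] at this
  exact (nonpos_of_mul_nonpos_left hnewton hk).not_gt this

theorem mem_gardingConeOn_erase (hi : i ∈ A) (hx : x ∈ gardingConeOn A (k + 1)) :
    x ∈ gardingConeOn (A.erase i) k := by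
  induction k generalizing x with
  | zero => intro j hj1 hj0; omega
  | succ k ih =>
    intro j hj1 hjk
    rcases lt_or_eq_of_le hjk with hjk | rfl
    · exact ih (gardingConeOn_anti (by omega) hx) j hj1 (by omega)
    let z : ℝ → ι → ℝ := fun t m => (1 - t) * x m + t
    have hz : ∀ t ∈ Set.Icc (0 : ℝ) 1, z t ∈ gardingConeOn A (k + 2) := fun t ht =>
      segment_one_mem_gardingConeOn hx ht
    have hcard : k + 1 ≤ #(A.erase i) := by
      rw [card_erase_of_mem hi]
      have := card_le_of_mem_gardingConeOn (by omega) hx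
      omega
    have hz1 : 0 < esymmOn (A.erase i) (k + 1) (z 1) := by
      simpa [z, Pi.one_def] using
        esymmOn_pos_of_mem_gardingConeOn (one_mem_gardingConeOn hcard) le_rfl
    have hpos := pos_of_pos_of_ne_zero_on_Icc zero_le_one
      (((continuous_esymmOn _ _).comp (by fun_prop : Continuous z)).continuousOn)
      (fun t ht => esymmOn_erase_ne_zero hi (hz t ht)
        (esymmOn_pos_of_mem_gardingConeOn (ih (gardingConeOn_anti (by omega) (hz t ht)))
          le_rfl)) hz1
    simpa [z] using hpos

lemma esymmOn_erase_div_add_eq (hi : i ∈ A) {w : ι → ℝ} (hw : esymmOn (A.erase i) k w ≠ 0) :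
    esymmOn (A.erase i) (k + 1) w / esymmOn (A.erase i) k w + w i =
      esymmOn A (k + 1) w / esymmOn (A.erase i) k w := by
  rw [div_add' _ _ _ hw, esymmOn_succ_of_mem hi, mul_comm (w i)]

lemma sq_mul_esymmOn_erase_div_le (hi : i ∈ A) (hx : x ∈ gardingConeOn A (k + 1))
    (hy : y ∈ gardingConeOn A (k + 1)) (hxy : x + y ∈ gardingConeOn A (k + 1))
    (hx' : x ∈ gardingConeOn (A.erase i) k) (hy' : y ∈ gardingConeOn (A.erase i) k)
    (hxy' : x + y ∈ gardingConeOn (A.erase i) k)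
    (hsup : esymmOn (A.erase i) (k + 1) x / esymmOn (A.erase i) k x +
        esymmOn (A.erase i) (k + 1) y / esymmOn (A.erase i) k y ≤
      esymmOn (A.erase i) (k + 1) (x + y) / esymmOn (A.erase i) k (x + y)) :
    (x i + y i) ^ 2 * esymmOn (A.erase i) k (x + y) / esymmOn A (k + 1) (x + y) ≤
      x i ^ 2 * esymmOn (A.erase i) k x / esymmOn A (k + 1) x +
        y i ^ 2 * esymmOn (A.erase i) k y / esymmOn A (k + 1) y := by
  have hden : ∀ w ∈ gardingConeOn A (k + 1), w ∈ gardingConeOn (A.erase i) k →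
      w i ^ 2 * esymmOn (A.erase i) k w / esymmOn A (k + 1) w =
        w i ^ 2 / (esymmOn (A.erase i) (k + 1) w / esymmOn (A.erase i) k w + w i) ∧
      0 < esymmOn (A.erase i) (k + 1) w / esymmOn (A.erase i) k w + w i := fun w hw hw' => by
    have hpos := esymmOn_pos_of_mem_gardingConeOn hw' le_rfl
    rw [esymmOn_erase_div_add_eq hi hpos.ne', div_div_eq_mul_div]
    exact ⟨rfl, div_pos (esymmOn_pos_of_mem_gardingConeOn hw le_rfl) hpos⟩
  obtain ⟨hx₁, hx₂⟩ := hden x hx hx'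
  obtain ⟨hy₁, hy₂⟩ := hden y hy hy'
  rw [hx₁, hy₁, show x i + y i = (x + y) i from rfl, (hden _ hxy hxy').1]
  exact sq_add_div_add_le_of_le hx₂ hy₂ hsup

lemma esymmOn_succ_succ_div_eq (A : Finset ι) (k : ℕ) {w : ι → ℝ}
    (hw : esymmOn A (k + 1) w ≠ 0) :
    (k + 2) * (esymmOn A (k + 2) w / esymmOn A (k + 1) w) =
      esymmOn A 1 w - ∑ i ∈ A, w i ^ 2 * esymmOn (A.erase i) k w / esymmOn A (k + 1) w := by
  rw [← mul_div_assoc, eq_sub_iff_add_eq, ← sum_div, ← add_div, div_eq_iff hw,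
    esymmOn_one_mul_esymmOn_succ]

/-- Marcus–Lopes. Additivity of the cone is carried along: the induction step needs it one level
down. -/
theorem add_mem_gardingConeOn_and_esymmOn_div_superadditive (k : ℕ)
    (hx : x ∈ gardingConeOn A (k + 1)) (hy : y ∈ gardingConeOn A (k + 1)) :
    x + y ∈ gardingConeOn A (k + 1) ∧
      esymmOn A (k + 1) x / esymmOn A k x + esymmOn A (k + 1) y / esymmOn A k y ≤
        esymmOn A (k + 1) (x + y) / esymmOn A k (x + y) := by
  induction k generalizing A x y with
  | zero =>
    simp only [zero_add, esymmOn_zero, div_one, esymmOn_one_add, le_refl, and_true]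
    intro j hj1 hj
    obtain rfl : j = 1 := by omega
    rw [esymmOn_one_add]
    exact add_pos (hx 1 le_rfl le_rfl) (hy 1 le_rfl le_rfl)
  | succ k ih =>
    have hx₁ := gardingConeOn_anti (Nat.le_succ _) hx
    have hy₁ := gardingConeOn_anti (Nat.le_succ _) hy
    obtain ⟨hxy₁, -⟩ := ih hx₁ hy₁
    have hterm : ∀ i ∈ A,
        (x + y) i ^ 2 * esymmOn (A.erase i) k (x + y) / esymmOn A (k + 1) (x + y) ≤
          x i ^ 2 * esymmOn (A.erase i) k x / esymmOn A (k + 1) x +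
            y i ^ 2 * esymmOn (A.erase i) k y / esymmOn A (k + 1) y := fun i hi => by
      have hx' := mem_gardingConeOn_erase hi hx
      have hy' := mem_gardingConeOn_erase hi hy
      obtain ⟨hxy', hsup⟩ := ih hx' hy'
      exact sq_mul_esymmOn_erase_div_le hi hx₁ hy₁ hxy₁ (gardingConeOn_anti (Nat.le_succ _) hx')
        (gardingConeOn_anti (Nat.le_succ _) hy') (gardingConeOn_anti (Nat.le_succ _) hxy') hsup
    have hpos : ∀ w ∈ gardingConeOn A (k + 1), esymmOn A (k + 1) w ≠ 0 := fun w hw =>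
      (esymmOn_pos_of_mem_gardingConeOn hw le_rfl).ne'
    have hsup : esymmOn A (k + 2) x / esymmOn A (k + 1) x +
        esymmOn A (k + 2) y / esymmOn A (k + 1) y ≤
          esymmOn A (k + 2) (x + y) / esymmOn A (k + 1) (x + y) := by
      have h := sum_le_sum hterm
      rw [sum_add_distrib] at h
      have hk : (0 : ℝ) < k + 2 := by positivity
      refine le_of_mul_le_mul_left ?_ hk
      rw [mul_add, esymmOn_succ_succ_div_eq A k (hpos x hx₁),
        esymmOn_succ_succ_div_eq A k (hpos y hy₁), esymmOn_succ_succ_div_eq A k (hpos _ hxy₁),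
        esymmOn_one_add]
      linarith
    refine ⟨fun j hj1 hj => ?_, hsup⟩
    rcases lt_or_eq_of_le hj with hj | rfl
    · exact hxy₁ j hj1 (by omega)
    have hq : 0 < esymmOn A (k + 2) (x + y) / esymmOn A (k + 1) (x + y) :=
      (add_pos (div_pos (hx _ hj1 le_rfl) (esymmOn_pos_of_mem_gardingConeOn hx₁ le_rfl))
        (div_pos (hy _ hj1 le_rfl) (esymmOn_pos_of_mem_gardingConeOn hy₁ le_rfl))).trans_le hsup
    exact (div_pos_iff_of_pos_right (esymmOn_pos_of_mem_gardingConeOn hxy₁ le_rfl)).1 hq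

lemma add_mem_gardingConeOn (hx : x ∈ gardingConeOn A k) (hy : y ∈ gardingConeOn A k) :
    x + y ∈ gardingConeOn A k := by
  cases k with
  | zero => intro j hj1 hj0; omega
  | succ k => exact (add_mem_gardingConeOn_and_esymmOn_div_superadditive k hx hy).1

def gardingConvexCone (A : Finset ι) (k : ℕ) : ConvexCone ℝ (ι → ℝ) where
  carrier := gardingConeOn A k
  smul_mem' _ hc _ hx := smul_mem_gardingConeOn hx hc
  add_mem' _ hx _ hy := add_mem_gardingConeOn hx hy

lemma esymmOn_div_rpow_superadditive (hlk : l < k) (hx : x ∈ gardingConeOn A k)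
    (hy : y ∈ gardingConeOn A k) :
    (esymmOn A k x / esymmOn A l x) ^ ((1 : ℝ) / ((k : ℝ) - (l : ℝ))) +
        (esymmOn A k y / esymmOn A l y) ^ ((1 : ℝ) / ((k : ℝ) - (l : ℝ))) ≤
      (esymmOn A k (x + y) / esymmOn A l (x + y)) ^ ((1 : ℝ) / ((k : ℝ) - (l : ℝ))) := by
  have hq : ∀ w ∈ gardingConeOn A k, ∀ j ∈ Ico l k, 0 < esymmOn A (j + 1) w / esymmOn A j w :=
    fun w hw j hj => div_pos (esymmOn_pos_of_mem_gardingConeOn hw (mem_Ico.1 hj).2)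
      (esymmOn_pos_of_mem_gardingConeOn hw (mem_Ico.1 hj).2.le)
  rw [esymmOn_div_rpow_eq_geom_mean hlk hx, esymmOn_div_rpow_eq_geom_mean hlk hy,
    esymmOn_div_rpow_eq_geom_mean hlk (add_mem_gardingConeOn hx hy)]
  refine (Real.geom_mean_add_geom_mean_le (nonempty_Ico.2 hlk) (hq x hx) (hq y hy)).trans ?_
  refine Real.rpow_le_rpow (prod_nonneg fun j hj => (add_pos (hq x hx j hj) (hq y hy j hj)).le)
    (prod_le_prod (fun j hj => (add_pos (hq x hx j hj) (hq y hy j hj)).le) fun j hj => ?_)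
    (by positivity)
  have hjk : j + 1 ≤ k := (mem_Ico.1 hj).2
  exact (add_mem_gardingConeOn_and_esymmOn_div_superadditive j (gardingConeOn_anti hjk hx)
    (gardingConeOn_anti hjk hy)).2

theorem concaveOn_esymmOn_div_rpow (A : Finset ι) (hlk : l < k) :
    ConcaveOn ℝ (gardingConeOn A k)
      (fun x => (esymmOn A k x / esymmOn A l x) ^ ((1 : ℝ) / ((k : ℝ) - (l : ℝ)))) :=
  (gardingConvexCone A k).concaveOn_of_superadditive
    (fun _ hx _ hc => esymmOn_div_rpow_smul hlk hx hc)
    (fun _ hx _ hy => esymmOn_div_rpow_superadditive hlk hx hy)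

end Superadditivity

theorem hessian_quotient_concave_general (n k l : ℕ) (hlk : l < k) :
    ConcaveOn ℝ (gardingCone n k)
      (fun x : Fin n → ℝ =>
        (esymm n k x / esymm n l x) ^ ((1 : ℝ) / ((k : ℝ) - (l : ℝ)))) :=
  concaveOn_esymmOn_div_rpow univ hlk

/-- For 0 ≤ l < k ≤ n, the function λ ↦ [σ_k(λ)/σ_l(λ)]^{1/(k-l)} is concave on Γ_k. -/
theorem hessian_quotient_concave (n k l : ℕ) (hlk : l < k) (hkn : k ≤ n) :
    ConcaveOn ℝ (gardingCone n k)
      (fun x : Fin n → ℝ =>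
        (esymm n k x / esymm n l x) ^ ((1 : ℝ) / ((k : ℝ) - (l : ℝ)))) :=
  hessian_quotient_concave_general n k l hlk
end
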